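/- arXiv:2408.07268 — 2 statements merged into one kernel-verified Lean document; each statement's English description precedes it below -/
import Mathlib

section
/- Let f : ℝ^d → ℝ be twice continuously differentiable with ∇²f(w) ⪯ L·I for all w (0 < L < ∞), and bounded below by f_min. Let (H̃_k)_{k≥0} be symmetric d×d matrices with μ̃·I ⪯ H̃_k ⪯ L̃·I for all k, where 0 < μ̃ and L ≤ L̃ < ∞. Let w₀ ∈ ℝ^d and define w_{k+1} = w_k − α H̃_k⁻¹ g_k with 0 < α ≤ μ̃/L, where each g_k satisfies ‖g_k − ∇f(w_k)‖²_{H̃_k⁻¹} ≤ θ̃_g² ‖∇f(w_k)‖²_{H̃_k⁻¹} + ι_k with θ̃_g ∈ [0,1) and ∑_{k=0}^∞ ι_k = ι̃ < ∞. Then lim_{k→∞} ‖∇f(w_k)‖² = 0, and for every positive integer T: min_{0 ≤ k ≤ T−1} ‖∇f(w_k)‖² ≤ (L̃/((1 − θ̃_g²) T)) · ( 2(f(w₀) − f_min)/α + ι̃ ). -/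
/-!
The Hessian bound gives the descent lemma `f (x + v) ≤ f x + ⟪∇f x, v⟫ + L/2 ‖v‖²`. For a step
`x⁺ = x - α S g` with `S = H̃⁻¹`, the step size `α ≤ μ̃ / L` lets `⟪S g, g⟫` absorb the curvature
term, and expanding `⟪S g, g⟫` around `∇f x` turns the error condition on `g` into
`f x⁺ ≤ f x - α (1 - θ²) / 2 ‖∇f x‖²_S + α ι / 2`. Telescoping against `f ≥ f_min` and using
`‖v‖² ≤ L̃ ‖v‖²_S` bounds the partial sums of `‖∇f (w k)‖²` uniformly; summability gives the limit,
and the minimum over `k < T` is at most the average.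
-/

open Finset Matrix Filter
open scoped RealInnerProductSpace

noncomputable section

abbrev Vec (d : ℕ) := EuclideanSpace ℝ (Fin d)

noncomputable def toOp {d : ℕ} (A : Matrix (Fin d) (Fin d) ℝ) : Vec d →L[ℝ] Vec d :=
  LinearMap.toContinuousLinearMap (Matrix.toEuclideanLin A)

theorem le_add_deriv_add_half_of_hasDerivAt_le {φ φ' φ'' : ℝ → ℝ} {M : ℝ}
    (hφ : ∀ t, HasDerivAt φ (φ' t) t) (hφ' : ∀ t, HasDerivAt φ' (φ'' t) t)
    (hM : ∀ t, φ'' t ≤ M) : φ 1 ≤ φ 0 + φ' 0 + M / 2 := by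
  have hslope : ∀ t, 0 ≤ t → φ' t ≤ φ' 0 + M * t := by
    have hanti : Antitone (fun t => φ' t - M * t) := by
      refine antitone_of_hasDerivAt_nonpos (f' := fun t => φ'' t - M) (fun t => ?_)
        (fun t => sub_nonpos.mpr (hM t))
      exact ((hφ' t).sub ((hasDerivAt_id' t).const_mul M)).congr_deriv (by ring)
    intro t ht
    have := hanti ht
    simp only [mul_zero, sub_zero] at this
    linarith
  have hanti : AntitoneOn (fun t => φ t - φ' 0 * t - M / 2 * t ^ 2) (Set.Icc 0 1) := by
    have hderiv : ∀ t, HasDerivAt (fun t => φ t - φ' 0 * t - M / 2 * t ^ 2)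
        (φ' t - φ' 0 - M * t) t := fun t =>
      (((hφ t).sub ((hasDerivAt_id' t).const_mul (φ' 0))).sub
        ((hasDerivAt_pow 2 t).const_mul (M / 2))).congr_deriv (by push_cast; ring)
    refine antitoneOn_of_hasDerivWithinAt_nonpos (convex_Icc 0 1)
      (HasDerivAt.continuousOn fun t _ => hderiv t) (fun t _ => (hderiv t).hasDerivWithinAt)
      (fun t ht => ?_)
    rw [interior_Icc] at ht
    linarith [hslope t ht.1.le]
  have := hanti (Set.left_mem_Icc.mpr zero_le_one) (Set.right_mem_Icc.mpr zero_le_one) zero_le_one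
  norm_num at this
  linarith

theorem sum_range_le_of_le_sub_succ_add {M : Type*} [AddCommGroup M] [PartialOrder M]
    [IsOrderedAddMonoid M] {F a b : ℕ → M} {m : M} (h : ∀ k, a k ≤ F k - F (k + 1) + b k)
    (hm : ∀ k, m ≤ F k) (T : ℕ) : ∑ k ∈ range T, a k ≤ F 0 - m + ∑ k ∈ range T, b k := by
  calc ∑ k ∈ range T, a k ≤ ∑ k ∈ range T, (F k - F (k + 1) + b k) := sum_le_sum fun k _ => h k
    _ = F 0 - F T + ∑ k ∈ range T, b k := by rw [sum_add_distrib, sum_range_sub']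
    _ ≤ F 0 - m + ∑ k ∈ range T, b k := by gcongr; exact hm T

section InnerProductSpace

variable {E : Type*} [NormedAddCommGroup E] [InnerProductSpace ℝ E]

theorem le_add_inner_add_of_hessian_le [CompleteSpace E] {L : ℝ} {f : E → ℝ} {gradf : E → E}
    {Hf : E → E →L[ℝ] E} (hgrad : ∀ x, HasGradientAt f (gradf x) x)
    (hHf : ∀ x, HasFDerivAt gradf (Hf x) x) (hHub : ∀ x v, ⟪Hf x v, v⟫ ≤ L * ‖v‖ ^ 2)
    (x v : E) : f (x + v) ≤ f x + ⟪gradf x, v⟫ + L / 2 * ‖v‖ ^ 2 := by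
  have hline : ∀ t : ℝ, HasDerivAt (fun s : ℝ => x + s • v) v t := fun t => by
    simpa using ((hasDerivAt_id t).smul_const v).const_add x
  have := le_add_deriv_add_half_of_hasDerivAt_le (M := L * ‖v‖ ^ 2)
    (φ := fun t => f (x + t • v)) (φ' := fun t => ⟪gradf (x + t • v), v⟫)
    (φ'' := fun t => ⟪Hf (x + t • v) v, v⟫)
    (fun t => (hgrad _).hasFDerivAt.comp_hasDerivAt t (hline t))
    (fun t => by simpa using ((hHf _).comp_hasDerivAt t (hline t)).inner ℝ (hasDerivAt_const t v))
    (fun t => hHub _ v)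
  simpa [mul_div_right_comm] using this

theorem LinearMap.IsSymmetric.inner_map_sub_sub {S : E →ₗ[ℝ] E} (hS : S.IsSymmetric) (a b : E) :
    ⟪S (a - b), a - b⟫ = ⟪S a, a⟫ - 2 * ⟪S a, b⟫ + ⟪S b, b⟫ := by
  rw [map_sub, inner_sub_left, inner_sub_right, inner_sub_right, hS b a, real_inner_comm (S a) b]
  ring

theorem LinearMap.IsSymmetric.of_rightInverse {S T : E →ₗ[ℝ] E} (hT : T.IsSymmetric)
    (hTS : ∀ v, T (S v) = v) : S.IsSymmetric := fun u v => by
  rw [← hTS v, ← hT, hTS, hTS]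

theorem mul_norm_sq_le_inner_of_rightInverse {S T : E →ₗ[ℝ] E} {μ : ℝ} (hTS : ∀ v, T (S v) = v)
    (hT : ∀ x, μ * ‖x‖ ^ 2 ≤ ⟪T x, x⟫) (v : E) : μ * ‖S v‖ ^ 2 ≤ ⟪S v, v⟫ := by
  simpa [hTS, real_inner_comm] using hT (S v)

theorem norm_sq_map_le_mul_inner {T : E →ₗ[ℝ] E} {Λ : ℝ} (hT : T.IsSymmetric)
    (hpos : ∀ x, 0 ≤ ⟪T x, x⟫) (hΛ : 0 < Λ) (hub : ∀ x, ⟪T x, x⟫ ≤ Λ * ‖x‖ ^ 2) (u : E) :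
    ‖T u‖ ^ 2 ≤ Λ * ⟪T u, u⟫ := by
  -- expand `0 ≤ ⟪T (u - Λ⁻¹ • T u), u - Λ⁻¹ • T u⟫` and bound the last term by `hub`
  have hexp := hT.inner_map_sub_sub u (Λ⁻¹ • T u)
  rw [map_smul, inner_smul_left, inner_smul_right, inner_smul_right, real_inner_self_eq_norm_sq]
    at hexp
  have hsq : Λ⁻¹ * ⟪T (T u), T u⟫ ≤ ‖T u‖ ^ 2 := by
    calc Λ⁻¹ * ⟪T (T u), T u⟫ ≤ Λ⁻¹ * (Λ * ‖T u‖ ^ 2) := by gcongr; exact hub _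
      _ = ‖T u‖ ^ 2 := by field_simp
  have hnonneg := hpos (u - Λ⁻¹ • T u)
  simp only [conj_trivial] at hexp
  rw [← mul_le_mul_iff_right₀ (inv_pos.mpr hΛ), ← mul_assoc, inv_mul_cancel₀ hΛ.ne', one_mul]
  nlinarith [inv_pos.mpr hΛ]

theorem norm_sq_le_mul_inner_of_rightInverse {S T : E →ₗ[ℝ] E} {Λ : ℝ} (hT : T.IsSymmetric)
    (hTS : ∀ v, T (S v) = v) (hpos : ∀ x, 0 ≤ ⟪T x, x⟫) (hΛ : 0 < Λ)
    (hub : ∀ x, ⟪T x, x⟫ ≤ Λ * ‖x‖ ^ 2) (v : E) : ‖v‖ ^ 2 ≤ Λ * ⟪S v, v⟫ := by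
  simpa [hTS, real_inner_comm] using norm_sq_map_le_mul_inner hT hpos hΛ hub (S v)

end InnerProductSpace

section InexactPreconditionedGradient

variable {E : Type*} [NormedAddCommGroup E] [InnerProductSpace ℝ E] [CompleteSpace E]
  {L : ℝ} {f : E → ℝ} {gradf : E → E} {Hf : E → E →L[ℝ] E}

theorem le_sub_of_inexact_preconditioned_step (hgrad : ∀ x, HasGradientAt f (gradf x) x)
    (hHf : ∀ x, HasFDerivAt gradf (Hf x) x) (hHub : ∀ x v, ⟪Hf x v, v⟫ ≤ L * ‖v‖ ^ 2)
    {S : E →ₗ[ℝ] E} {μ α θ ι : ℝ} (hS : S.IsSymmetric) (hSμ : ∀ v, μ * ‖S v‖ ^ 2 ≤ ⟪S v, v⟫)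
    (hα0 : 0 ≤ α) (hα : L * α ≤ μ) (x g : E)
    (herr : ⟪S (g - gradf x), g - gradf x⟫ ≤ θ ^ 2 * ⟪S (gradf x), gradf x⟫ + ι) :
    f (x - α • S g) ≤ f x - α * (1 - θ ^ 2) / 2 * ⟪S (gradf x), gradf x⟫ + α / 2 * ι := by
  have hdesc := le_add_inner_add_of_hessian_le hgrad hHf hHub x (-(α • S g))
  rw [← sub_eq_add_neg, inner_neg_right, real_inner_smul_right, real_inner_comm, norm_neg,
    norm_smul, mul_pow, Real.norm_eq_abs, sq_abs] at hdesc
  have hcurv : L / 2 * (α ^ 2 * ‖S g‖ ^ 2) ≤ α / 2 * ⟪S g, g⟫ := by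
    have : L * α * ‖S g‖ ^ 2 ≤ ⟪S g, g⟫ := by
      nlinarith [hSμ g, mul_le_mul_of_nonneg_right hα (sq_nonneg ‖S g‖)]
    nlinarith [mul_le_mul_of_nonneg_left this hα0]
  calc f (x - α • S g) ≤ f x - α * ⟪S g, gradf x⟫ + α / 2 * ⟪S g, g⟫ := by linarith
    _ = f x + α / 2 * (⟪S (g - gradf x), g - gradf x⟫ - ⟪S (gradf x), gradf x⟫) := by
      rw [hS.inner_map_sub_sub]; ring
    _ ≤ f x + α / 2 * (θ ^ 2 * ⟪S (gradf x), gradf x⟫ + ι - ⟪S (gradf x), gradf x⟫) := by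
      gcongr
    _ = f x - α * (1 - θ ^ 2) / 2 * ⟪S (gradf x), gradf x⟫ + α / 2 * ι := by ring

theorem sum_range_norm_sq_gradient_le_of_inexact_preconditioned
    (hgrad : ∀ x, HasGradientAt f (gradf x) x)
    (hHf : ∀ x, HasFDerivAt gradf (Hf x) x) (hHub : ∀ x v, ⟪Hf x v, v⟫ ≤ L * ‖v‖ ^ 2)
    {fmin μ Λ α θ ιt : ℝ} {S : ℕ → E →ₗ[ℝ] E} {ι : ℕ → ℝ} {w g : ℕ → E}
    (hbdd : ∀ x, fmin ≤ f x) (hS : ∀ k, (S k).IsSymmetric)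
    (hSμ : ∀ k v, μ * ‖S k v‖ ^ 2 ≤ ⟪S k v, v⟫) (hSΛ : ∀ k v, ‖v‖ ^ 2 ≤ Λ * ⟪S k v, v⟫)
    (hΛ : 0 ≤ Λ) (hα0 : 0 < α) (hα : L * α ≤ μ) (hθ : θ ^ 2 < 1)
    (hiter : ∀ k, w (k + 1) = w k - α • S k (g k)) (hι : ∀ k, 0 ≤ ι k) (hι_sum : HasSum ι ιt)
    (herr : ∀ k, ⟪S k (g k - gradf (w k)), g k - gradf (w k)⟫ ≤
      θ ^ 2 * ⟪S k (gradf (w k)), gradf (w k)⟫ + ι k) (T : ℕ) :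
    ∑ k ∈ range T, ‖gradf (w k)‖ ^ 2 ≤ Λ / (1 - θ ^ 2) * (2 * (f (w 0) - fmin) / α + ιt) := by
  have hdecrease := sum_range_le_of_le_sub_succ_add (F := fun k => f (w k))
    (a := fun k => α * (1 - θ ^ 2) / 2 * ⟪S k (gradf (w k)), gradf (w k)⟫)
    (b := fun k => α / 2 * ι k) (m := fmin)
    (fun k => by
      have := le_sub_of_inexact_preconditioned_step hgrad hHf hHub (hS k) (hSμ k) hα0.le hα
        (w k) (g k) (herr k)
      rw [hiter]; linarith)
    (fun k => hbdd _) T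
  rw [← mul_sum, ← mul_sum] at hdecrease
  have hι_le : ∑ k ∈ range T, ι k ≤ ιt := sum_le_hasSum _ (fun k _ => hι k) hι_sum
  have hq : (1 - θ ^ 2) * ∑ k ∈ range T, ⟪S k (gradf (w k)), gradf (w k)⟫ ≤
      2 * (f (w 0) - fmin) / α + ιt := by
    rw [← mul_le_mul_iff_right₀ hα0, mul_add, mul_div_cancel₀ _ hα0.ne']
    nlinarith [mul_le_mul_of_nonneg_left hι_le hα0.le]
  calc ∑ k ∈ range T, ‖gradf (w k)‖ ^ 2
        ≤ Λ * ∑ k ∈ range T, ⟪S k (gradf (w k)), gradf (w k)⟫ := by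
        rw [mul_sum]; exact sum_le_sum fun k _ => hSΛ k _
    _ ≤ Λ * ((2 * (f (w 0) - fmin) / α + ιt) / (1 - θ ^ 2)) := by
        gcongr; rwa [le_div_iff₀ (sub_pos.mpr hθ), mul_comm]
    _ = Λ / (1 - θ ^ 2) * (2 * (f (w 0) - fmin) / α + ιt) := by ring

end InexactPreconditionedGradient

theorem isUnit_det_of_coercive {d : ℕ} {μ : ℝ} {H : Matrix (Fin d) (Fin d) ℝ} (hμ : 0 < μ)
    (hH : ∀ v : Vec d, μ * ‖v‖ ^ 2 ≤ ⟪toOp H v, v⟫) : IsUnit H.det := by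
  rw [← LinearMap.det_toLpLin 2, ← LinearMap.isUnit_iff_isUnit_det,
    LinearMap.isUnit_iff_ker_eq_bot, LinearMap.ker_eq_bot']
  intro v hv
  have := hH v
  rw [show toOp H v = 0 from hv, inner_zero_left] at this
  exact norm_eq_zero.mp (pow_eq_zero_iff two_ne_zero |>.mp
    (le_antisymm (nonpos_of_mul_nonpos_right this hμ) (sq_nonneg _)))

theorem toOp_apply_toOp_inv_apply {d : ℕ} {H : Matrix (Fin d) (Fin d) ℝ} (hH : IsUnit H.det)
    (v : Vec d) : toOp H (toOp H⁻¹ v) = v := by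
  simp [toOp, ← LinearMap.comp_apply, ← Matrix.toLpLin_mul_same, Matrix.mul_nonsing_inv H hH]

theorem isSymmetric_toOp {d : ℕ} {H : Matrix (Fin d) (Fin d) ℝ} (hH : H.IsSymm) :
    (toOp H : Vec d →ₗ[ℝ] Vec d).IsSymmetric :=
  Matrix.isSymmetric_toEuclideanLin_iff.mpr hH

theorem global_sublinear_convergence_deterministic_general {d : ℕ}
    (L μt Lt α θg fmin ιt : ℝ)
    (hL : 0 < L) (hμt : 0 < μt) (hLt : L ≤ Lt)
    (f : Vec d → ℝ) (gradf : Vec d → Vec d) (Hf : Vec d → (Vec d →L[ℝ] Vec d))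
    (hgrad : ∀ x, HasGradientAt f (gradf x) x)
    (hHf : ∀ x, HasFDerivAt gradf (Hf x) x)
    (hHub : ∀ x (v : Vec d), ⟪Hf x v, v⟫ ≤ L * ‖v‖ ^ 2)
    (hbdd : ∀ x, fmin ≤ f x)
    (Ht : ℕ → Matrix (Fin d) (Fin d) ℝ)
    (hHtsym : ∀ k, (Ht k).IsSymm)
    (hHtlb : ∀ k (v : Vec d), μt * ‖v‖ ^ 2 ≤ ⟪toOp (Ht k) v, v⟫)
    (hHtub : ∀ k (v : Vec d), ⟪toOp (Ht k) v, v⟫ ≤ Lt * ‖v‖ ^ 2)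
    (w g : ℕ → Vec d) (hα0 : 0 < α) (hα : α ≤ μt / L)
    (hiter : ∀ k, w (k + 1) = w k - α • toOp (Ht k)⁻¹ (g k))
    (hθg : θg ∈ Set.Ico (0 : ℝ) 1)
    (ι : ℕ → ℝ) (hι_pos : ∀ k, 0 < ι k) (hι_sum : HasSum ι ιt)
    (hnorm : ∀ k, ⟪toOp (Ht k)⁻¹ (g k - gradf (w k)), g k - gradf (w k)⟫ ≤
      θg ^ 2 * ⟪toOp (Ht k)⁻¹ (gradf (w k)), gradf (w k)⟫ + ι k) :
    Tendsto (fun k => ‖gradf (w k)‖ ^ 2) atTop (nhds 0) ∧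
    ∀ T : ℕ, ∀ hT : 0 < T,
      (Finset.range T).inf' (Finset.nonempty_range_iff.mpr hT.ne')
          (fun k => ‖gradf (w k)‖ ^ 2) ≤
        Lt / ((1 - θg ^ 2) * T) * (2 * (f (w 0) - fmin) / α + ιt) := by
  have hLt0 : 0 < Lt := hL.trans_le hLt
  have hαL : L * α ≤ μt := by rw [mul_comm]; exact (le_div_iff₀ hL).mp hα
  have hθ : θg ^ 2 < 1 := pow_lt_one₀ hθg.1 hθg.2 two_ne_zero
  have hinv k : ∀ v, toOp (Ht k) (toOp (Ht k)⁻¹ v) = v :=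
    toOp_apply_toOp_inv_apply (isUnit_det_of_coercive hμt (hHtlb k))
  have hsymm k := isSymmetric_toOp (hHtsym k)
  have hpos k v : 0 ≤ ⟪toOp (Ht k) v, v⟫ := (mul_nonneg hμt.le (sq_nonneg _)).trans (hHtlb k v)
  have hsum := sum_range_norm_sq_gradient_le_of_inexact_preconditioned
    (S := fun k => (toOp (Ht k)⁻¹ : Vec d →ₗ[ℝ] Vec d)) hgrad hHf hHub hbdd
    (fun k => (hsymm k).of_rightInverse (hinv k))
    (fun k => mul_norm_sq_le_inner_of_rightInverse (hinv k) (hHtlb k))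
    (fun k => norm_sq_le_mul_inner_of_rightInverse (hsymm k) (hinv k) (hpos k) hLt0 (hHtub k))
    hLt0.le hα0 hαL hθ hiter (fun k => (hι_pos k).le) hι_sum hnorm
  refine ⟨(summable_of_sum_range_le (fun k => by positivity) hsum).tendsto_atTop_zero,
    fun T hT => ?_⟩
  have hne := nonempty_range_iff.mpr hT.ne'
  calc (range T).inf' hne (fun k => ‖gradf (w k)‖ ^ 2)
      ≤ (range T).expect (fun k => ‖gradf (w k)‖ ^ 2) := le_expect hne fun k hk => inf'_le _ hk
    _ = (∑ k ∈ range T, ‖gradf (w k)‖ ^ 2) / T := by rw [expect_eq_sum_div_card, card_range]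
    _ ≤ Lt / (1 - θg ^ 2) * (2 * (f (w 0) - fmin) / α + ιt) / T := by gcongr; exact hsum T
    _ = Lt / ((1 - θg ^ 2) * T) * (2 * (f (w 0) - fmin) / α + ιt) := by rw [← div_div]; ring

/-- Global sublinear convergence with deterministic adaptive gradient
sampling for nonconvex functions bounded below. -/
theorem global_sublinear_convergence_deterministic {d : ℕ}
    (L μt Lt α θg fmin ιt : ℝ)
    (hL : 0 < L) (hμt : 0 < μt) (hLt : L ≤ Lt)
    (f : Vec d → ℝ) (gradf : Vec d → Vec d) (Hf : Vec d → (Vec d →L[ℝ] Vec d))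
    (hsmooth : ContDiff ℝ 2 f)
    (hgrad : ∀ x, HasGradientAt f (gradf x) x)
    (hHf : ∀ x, HasFDerivAt gradf (Hf x) x)
    (hHub : ∀ x (v : Vec d), ⟪Hf x v, v⟫ ≤ L * ‖v‖ ^ 2)
    (hbdd : ∀ x, fmin ≤ f x)
    (Ht : ℕ → Matrix (Fin d) (Fin d) ℝ)
    (hHtsym : ∀ k, (Ht k).IsSymm)
    (hHtlb : ∀ k (v : Vec d), μt * ‖v‖ ^ 2 ≤ ⟪toOp (Ht k) v, v⟫)
    (hHtub : ∀ k (v : Vec d), ⟪toOp (Ht k) v, v⟫ ≤ Lt * ‖v‖ ^ 2)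
    (w g : ℕ → Vec d) (hα0 : 0 < α) (hα : α ≤ μt / L)
    (hiter : ∀ k, w (k + 1) = w k - α • toOp (Ht k)⁻¹ (g k))
    (hθg : θg ∈ Set.Ico (0 : ℝ) 1)
    (ι : ℕ → ℝ) (hι_pos : ∀ k, 0 < ι k) (hι_sum : HasSum ι ιt)
    (hnorm : ∀ k, ⟪toOp (Ht k)⁻¹ (g k - gradf (w k)), g k - gradf (w k)⟫ ≤
      θg ^ 2 * ⟪toOp (Ht k)⁻¹ (gradf (w k)), gradf (w k)⟫ + ι k) :
    Tendsto (fun k => ‖gradf (w k)‖ ^ 2) atTop (nhds 0) ∧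
    ∀ T : ℕ, ∀ hT : 0 < T,
      (Finset.range T).inf' (Finset.nonempty_range_iff.mpr hT.ne')
          (fun k => ‖gradf (w k)‖ ^ 2) ≤
        Lt / ((1 - θg ^ 2) * T) * (2 * (f (w 0) - fmin) / α + ιt) :=
  global_sublinear_convergence_deterministic_general L μt Lt α θg fmin ιt hL hμt hLt f gradf Hf
    hgrad hHf hHub hbdd Ht hHtsym hHtlb hHtub w g hα0 hα hiter hθg ι hι_pos hι_sum hnorm
end
end

section
/- On a probability space, let f : ℝ^d → ℝ be twice continuously differentiable with ∇²f(w) ⪯ L·I for all w (0 < L < ∞) and bounded below by f_min. Let (w_k), (g_k) be ℝ^d-valued random sequences and (H̃_k) random symmetric matrices with μ̃·I ⪯ H̃_k ⪯ L̃·I almost surely (0 < μ̃, L ≤ L̃ < ∞), satisfying w_{k+1} = w_k − α H̃_k⁻¹ g_k with 0 < α ≤ μ̃/L and w₀ deterministic, and suppose each g_k satisfies the stochastic norm condition E[ ‖g_k − ∇f(w_k)‖²_{H̃_k⁻¹} | w_k, H̃_k ] ≤ θ̃_g² ‖∇f(w_k)‖²_{H̃_k⁻¹} + ι_k with θ̃_g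 ∈ [0,1) and ∑_{k=0}^∞ ι_k = ι̃ < ∞. Then for every positive integer T: min_{0 ≤ k ≤ T−1} E[‖∇f(w_k)‖²] ≤ (L̃/((1 − θ̃_g²) T)) · ( 2(f(w₀) − f_min)/α + ι̃ ). Moreover, ∑_{k=0}^∞ ‖∇f(w_k)‖² < ∞ almost surely, and consequently ‖∇f(w_k)‖² → 0 almost surely. -/
/-!
The Hessian bound gives the descent inequality `f y ≤ f x + ⟪∇f x, y - x⟫ + L/2 ‖y - x‖²`.
Since `αL ≤ μ̃` and `μ̃ ‖H̃⁻¹ v‖² ≤ ⟪H̃⁻¹ v, v⟫`, the preconditioned step then satisfies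
`f w_{k+1} ≤ f w_k - α/2 ‖∇f w_k‖²_{H̃⁻¹} + α/2 ‖g_k - ∇f w_k‖²_{H̃⁻¹}`. Taking expectations, the
conditional norm condition turns the noise term into `θ̃² E‖∇f w_k‖²_{H̃⁻¹} + ι_k`, so
`E f w_{k+1} ≤ E f w_k - α/2 (1 - θ̃²) E‖∇f w_k‖²_{H̃⁻¹} + α/2 ι_k`. Telescoping against
`f ≥ f_min`, and `‖v‖² ≤ L̃ ‖v‖²_{H̃⁻¹}` (Cauchy–Schwarz for the form of `H̃`), bound
`∑_k E‖∇f w_k‖²` uniformly; this gives the rate for the minimum and, by monotone convergence,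
almost sure summability.
-/

open Finset Matrix MeasureTheory Filter
open scoped RealInnerProductSpace

noncomputable section

theorem le_add_deriv_add_of_deriv_deriv_le {φ φ' φ'' : ℝ → ℝ} {C : ℝ}
    (hφ : ∀ t, HasDerivAt φ (φ' t) t) (hφ' : ∀ t, HasDerivAt φ' (φ'' t) t)
    (hC : ∀ t, φ'' t ≤ C) : φ 1 ≤ φ 0 + φ' 0 + C / 2 := by
  have hslope : ∀ t, 0 ≤ t → φ' t - φ' 0 ≤ C * t := fun t ht => by
    simpa using image_sub_le_mul_sub_of_deriv_le (fun s => (hφ' s).differentiableAt)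
      (fun s => (hφ' s).deriv ▸ hC s) ht
  set χ : ℝ → ℝ := fun t => φ t - φ' 0 * t - C / 2 * t ^ 2
  have hχ : ∀ t, HasDerivAt χ (φ' t - φ' 0 - C * t) t := fun t => by
    refine (((hφ t).sub ((hasDerivAt_id t).const_mul (φ' 0))).sub
      ((hasDerivAt_pow 2 t).const_mul (C / 2))).congr_deriv ?_
    simp only [mul_one, Nat.cast_ofNat]; ring
  have hχ_anti := (convex_Icc (0 : ℝ) 1).image_sub_le_mul_sub_of_deriv_le
    (fun t _ => (hχ t).continuousAt.continuousWithinAt)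
    (fun t _ => (hχ t).differentiableAt.differentiableWithinAt) (C := 0)
    (fun t ht => by
      rw [interior_Icc] at ht
      linarith [(hχ t).deriv, hslope t ht.1.le]) 0 (by simp) 1 (by simp) zero_le_one
  simp only [χ] at hχ_anti
  linarith

section InnerProductSpace

variable {E : Type*} [NormedAddCommGroup E] [InnerProductSpace ℝ E]

theorem le_add_inner_add_of_inner_hessian_le [CompleteSpace E] {f : E → ℝ} {gradf : E → E}
    {Hf : E → E →L[ℝ] E} {L : ℝ} (hgrad : ∀ x, HasGradientAt f (gradf x) x)
    (hHf : ∀ x, HasFDerivAt gradf (Hf x) x) (hHub : ∀ x v, ⟪Hf x v, v⟫ ≤ L * ‖v‖ ^ 2)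
    (x y : E) : f y ≤ f x + ⟪gradf x, y - x⟫ + L / 2 * ‖y - x‖ ^ 2 := by
  set v := y - x
  have hline : ∀ t : ℝ, HasDerivAt (fun t : ℝ => x + t • v) v t := fun t => by
    simpa using ((hasDerivAt_id t).smul_const v).const_add x
  have h := le_add_deriv_add_of_deriv_deriv_le (φ := fun t => f (x + t • v))
    (φ' := fun t => ⟪gradf (x + t • v), v⟫) (φ'' := fun t => ⟪Hf (x + t • v) v, v⟫)
    (fun t => by
      simpa [InnerProductSpace.toDual_apply_apply, Function.comp_def] using
        (hasGradientAt_iff_hasFDerivAt.mp (hgrad _)).comp_hasDerivAt t (hline t))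
    (fun t => by
      simpa using ((hHf _).comp_hasDerivAt t (hline t)).inner ℝ (hasDerivAt_const t v))
    (fun t => hHub _ v)
  simpa [v, mul_div_right_comm] using h

theorem apply_sub_smul_le_of_inner_hessian_le [CompleteSpace E] {f : E → ℝ} {gradf : E → E}
    {Hf : E → E →L[ℝ] E} {L : ℝ} (hgrad : ∀ x, HasGradientAt f (gradf x) x)
    (hHf : ∀ x, HasFDerivAt gradf (Hf x) x) (hHub : ∀ x v, ⟪Hf x v, v⟫ ≤ L * ‖v‖ ^ 2)
    {S : E →L[ℝ] E} (hS : (S : E →ₗ[ℝ] E).IsSymmetric) {μ α : ℝ}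
    (hSμ : ∀ v, μ * ‖S v‖ ^ 2 ≤ ⟪S v, v⟫) (hα : 0 ≤ α) (hαL : α * L ≤ μ) (x g : E) :
    f (x - α • S g) ≤ f x - α / 2 * ⟪S (gradf x), gradf x⟫
      + α / 2 * ⟪S (g - gradf x), g - gradf x⟫ := by
  have hdesc := le_add_inner_add_of_inner_hessian_le hgrad hHf hHub x (x - α • S g)
  rw [sub_sub_cancel_left, norm_neg, inner_neg_right, real_inner_smul_right, norm_smul,
    Real.norm_of_nonneg hα] at hdesc
  set G := gradf x
  have hquad : L / 2 * (α * ‖S g‖) ^ 2 ≤ α / 2 * ⟪S g, g⟫ := by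
    nlinarith [mul_le_mul_of_nonneg_right hαL (mul_nonneg hα (sq_nonneg ‖S g‖)), hSμ g]
  have hpolar : 2 * ⟪G, S g⟫ - ⟪S g, g⟫ = ⟪S G, G⟫ - ⟪S (g - G), g - G⟫ := by
    obtain ⟨e, rfl⟩ : ∃ e, g = G + e := ⟨g - G, by abel⟩
    have hGe : ⟪G, S e⟫ = ⟪S G, e⟫ := (hS G e).symm
    simp only [add_sub_cancel_left, map_add, inner_add_left, inner_add_right,
      real_inner_comm G, hGe]
    ring
  linarith [congrArg (α / 2 * ·) hpolar]

namespace LinearMap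

theorem IsPositive.inner_sq_le_inner_self_mul {T : E →ₗ[ℝ] E} (hT : T.IsPositive) (x y : E) :
    ⟪T x, y⟫ ^ 2 ≤ ⟪T x, x⟫ * ⟪T y, y⟫ := by
  have hquad : ∀ t : ℝ, 0 ≤ ⟪T y, y⟫ * (t * t) + 2 * ⟪T x, y⟫ * t + ⟪T x, x⟫ := fun t => by
    have hyx : ⟪T y, x⟫ = ⟪T x, y⟫ := by rw [hT.isSymmetric y x, real_inner_comm]
    have := hT.inner_nonneg_left (x + t • y)
    simp only [map_add, map_smul, inner_add_left, inner_add_right, real_inner_smul_left,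
      real_inner_smul_right, hyx] at this
    linarith
  have := discrim_le_zero hquad
  rw [discrim] at this
  linarith

theorem IsSymmetric.of_rightInverse_s15 {T S : E →ₗ[ℝ] E} (hT : T.IsSymmetric)
    (hTS : ∀ v, T (S v) = v) : S.IsSymmetric := fun u v =>
  calc ⟪S u, v⟫ = ⟪S u, T (S v)⟫ := by rw [hTS]
    _ = ⟪T (S u), S v⟫ := (hT _ _).symm
    _ = ⟪u, S v⟫ := by rw [hTS]

theorem mul_norm_sq_le_inner_of_rightInverse {T S : E →ₗ[ℝ] E} (hTS : ∀ v, T (S v) = v)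
    {μ : ℝ} (hμ : ∀ v, μ * ‖v‖ ^ 2 ≤ ⟪T v, v⟫) (v : E) : μ * ‖S v‖ ^ 2 ≤ ⟪S v, v⟫ := by
  simpa only [hTS, real_inner_comm] using hμ (S v)

theorem norm_inner_le_inv_mul_norm_sq_of_rightInverse {T S : E →ₗ[ℝ] E}
    (hTS : ∀ v, T (S v) = v) {μ : ℝ} (hμ0 : 0 < μ) (hμ : ∀ v, μ * ‖v‖ ^ 2 ≤ ⟪T v, v⟫) (v : E) :
    ‖⟪S v, v⟫‖ ≤ μ⁻¹ * ‖v‖ ^ 2 := by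
  have h := mul_norm_sq_le_inner_of_rightInverse hTS hμ v
  have hcs := real_inner_le_norm (S v) v
  rw [Real.norm_of_nonneg (by nlinarith [sq_nonneg ‖S v‖]), le_inv_mul_iff₀ hμ0]
  nlinarith [norm_nonneg v, norm_nonneg (S v), sq_nonneg (‖v‖ - μ * ‖S v‖)]

theorem norm_sq_le_mul_inner_of_rightInverse {T S : E →ₗ[ℝ] E} (hT : T.IsPositive)
    (hTS : ∀ v, T (S v) = v) {Λ : ℝ} (hΛ : ∀ v, ⟪T v, v⟫ ≤ Λ * ‖v‖ ^ 2) (v : E) :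
    ‖v‖ ^ 2 ≤ Λ * ⟪S v, v⟫ := by
  rcases eq_or_ne v 0 with rfl | hv
  · simp
  have hcs := hT.inner_sq_le_inner_self_mul (S v) v
  rw [hTS, real_inner_self_eq_norm_sq, real_inner_comm] at hcs
  have hSv : 0 ≤ ⟪S v, v⟫ := by simpa only [hTS] using hT.inner_nonneg_right (S v)
  have hv2 : 0 < ‖v‖ ^ 2 := by positivity
  nlinarith [mul_le_mul_of_nonneg_left (hΛ v) hSv]

end LinearMap

end InnerProductSpace

section Matrix

variable {d : ℕ}

theorem toOp_isSymmetric {A : Matrix (Fin d) (Fin d) ℝ} (hA : A.IsSymm) :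
    (toOp A : Vec d →ₗ[ℝ] Vec d).IsSymmetric :=
  isSymmetric_toEuclideanLin_iff.mpr (isHermitian_iff_isSymm.mpr hA)

theorem isUnit_of_mul_norm_sq_le_inner_toOp {A : Matrix (Fin d) (Fin d) ℝ} {μ : ℝ} (hμ : 0 < μ)
    (h : ∀ v : Vec d, μ * ‖v‖ ^ 2 ≤ ⟪toOp A v, v⟫) : IsUnit A := by
  refine mulVec_injective_iff_isUnit.mp fun u v huv => ?_
  have huv' := h (WithLp.toLp 2 (u - v))
  simp only [toOp, LinearMap.coe_toContinuousLinearMap', toLpLin_apply, mulVec_sub, huv,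
    sub_self, WithLp.toLp_zero, inner_zero_left] at huv'
  have : ‖WithLp.toLp 2 (u - v)‖ ^ 2 = 0 :=
    le_antisymm (nonpos_of_mul_nonpos_right huv' hμ) (sq_nonneg _)
  simpa [sub_eq_zero] using this

theorem toOp_apply_toOp_inv {A : Matrix (Fin d) (Fin d) ℝ} (hA : IsUnit A) (v : Vec d) :
    toOp A (toOp A⁻¹ v) = v := by
  simp [toOp, toLpLin_apply, mulVec_mulVec, mul_nonsing_inv _ ((isUnit_iff_isUnit_det A).mp hA)]

theorem toOp_inv_bounds {A : Matrix (Fin d) (Fin d) ℝ} {μ Λ : ℝ} (hμ : 0 < μ) (hA : A.IsSymm)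
    (hlb : ∀ v : Vec d, μ * ‖v‖ ^ 2 ≤ ⟪toOp A v, v⟫)
    (hub : ∀ v : Vec d, ⟪toOp A v, v⟫ ≤ Λ * ‖v‖ ^ 2) :
    (toOp A⁻¹ : Vec d →ₗ[ℝ] Vec d).IsSymmetric ∧
      (∀ v, μ * ‖toOp A⁻¹ v‖ ^ 2 ≤ ⟪toOp A⁻¹ v, v⟫) ∧
      (∀ v, ‖v‖ ^ 2 ≤ Λ * ⟪toOp A⁻¹ v, v⟫) ∧
      (∀ v, ‖⟪toOp A⁻¹ v, v⟫‖ ≤ μ⁻¹ * ‖v‖ ^ 2) := by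
  have hTS : ∀ v, (toOp A : Vec d →ₗ[ℝ] Vec d) ((toOp A⁻¹ : Vec d →ₗ[ℝ] Vec d) v) = v :=
    toOp_apply_toOp_inv (isUnit_of_mul_norm_sq_le_inner_toOp hμ hlb)
  have hT : (toOp A : Vec d →ₗ[ℝ] Vec d).IsPositive :=
    ⟨toOp_isSymmetric hA, fun v => le_trans (by positivity) (hlb v)⟩
  refine ⟨hT.isSymmetric.of_rightInverse_s15 hTS, ?_, ?_, ?_⟩
  · exact LinearMap.mul_norm_sq_le_inner_of_rightInverse hTS hlb
  · exact LinearMap.norm_sq_le_mul_inner_of_rightInverse hT hTS hub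
  · exact LinearMap.norm_inner_le_inv_mul_norm_sq_of_rightInverse hTS hμ hlb

theorem Measurable.matrix_inv {Ω n : Type*} [MeasurableSpace Ω] [Fintype n] [DecidableEq n]
    {A : Ω → Matrix n n ℝ} (hA : Measurable fun ω => of.symm (A ω)) :
    Measurable fun ω => of.symm (A ω)⁻¹ := by
  have hdet : Continuous fun M : n → n → ℝ => (of M).det := continuous_id.matrix_det
  have hadj : Continuous fun M : n → n → ℝ => of.symm (of M).adjugate :=
    continuous_id.matrix_adjugate
  refine measurable_pi_lambda _ fun i => measurable_pi_lambda _ fun j => ?_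
  simp only [Matrix.inv_def, Ring.inverse_eq_inv']
  exact (hdet.measurable.comp hA).inv.mul
    ((measurable_pi_apply j).comp ((measurable_pi_apply i).comp (hadj.measurable.comp hA)))

theorem continuous_inner_toOp :
    Continuous fun p : (Fin d → Fin d → ℝ) × Vec d => ⟪toOp (of p.1) p.2, p.2⟫ := by
  simp only [toOp, LinearMap.coe_toContinuousLinearMap', toLpLin_apply]
  exact (PiLp.continuous_toLp 2 _ |>.comp (continuous_fst.matrix_mulVec
    ((PiLp.continuous_ofLp 2 _).comp continuous_snd))).inner continuous_snd

theorem Measurable.inner_toOp_inv {Ω : Type*} [MeasurableSpace Ω]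
    {A : Ω → Matrix (Fin d) (Fin d) ℝ} {v : Ω → Vec d}
    (hA : Measurable fun ω => of.symm (A ω)) (hv : Measurable v) :
    Measurable fun ω => ⟪toOp (A ω)⁻¹ (v ω), v ω⟫ := by
  simpa only [Function.comp_def, Equiv.apply_symm_apply] using
    continuous_inner_toOp.measurable.comp (hA.matrix_inv.prodMk hv)

end Matrix

theorem Finset.inf'_le_div_card_of_sum_le {ι : Type*} {s : Finset ι} (hs : s.Nonempty)
    {G : ι → ℝ} {C : ℝ} (h : ∑ i ∈ s, G i ≤ C) : s.inf' hs G ≤ C / #s := by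
  rw [le_div_iff₀ (by exact_mod_cast hs.card_pos), mul_comm, ← nsmul_eq_mul]
  exact (card_nsmul_le_sum s G _ fun i hi => inf'_le G hi).trans h

theorem sum_range_le_of_le_sub_mul_add {F q b : ℕ → ℝ} {c m B : ℝ} (hc : 0 < c)
    (h : ∀ k, F (k + 1) ≤ F k - c * q k + b k) (hm : ∀ k, m ≤ F k) (hb0 : ∀ k, 0 ≤ b k)
    (hb : HasSum b B) (T : ℕ) :
    ∑ k ∈ range T, q k ≤ (F 0 - m + B) / c := by
  have htele : c * ∑ k ∈ range T, q k ≤ F 0 - F T + ∑ k ∈ range T, b k := by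
    induction T with
    | zero => simp
    | succ T ih => rw [sum_range_succ, sum_range_succ]; linarith [h T]
  rw [le_div_iff₀ hc]
  linarith [hm T, sum_le_hasSum (range T) (fun k _ => hb0 k) hb]

namespace MeasureTheory

variable {Ω : Type*} {m m0 : MeasurableSpace Ω} {μ : Measure Ω}

theorem integral_le_of_condExp_le [IsFiniteMeasure μ] {X Y : Ω → ℝ} (hm : m ≤ m0)
    (h : μ[X | m] ≤ᵐ[μ] Y) (hY : Integrable Y μ) : ∫ ω, X ω ∂μ ≤ ∫ ω, Y ω ∂μ :=
  integral_condExp (μ := μ) (f := X) hm ▸ integral_mono_ae integrable_condExp hY h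

theorem ae_summable_of_summable_integral {X : ℕ → Ω → ℝ} (hX : ∀ n, Integrable (X n) μ)
    (hX0 : ∀ n ω, 0 ≤ X n ω) (hs : Summable fun n => ∫ ω, X n ω ∂μ) :
    ∀ᵐ ω ∂μ, Summable fun n => X n ω := by
  have hfin : ∑' n, eLpNorm (X n) 1 μ ≠ ⊤ := by
    simp_rw [eLpNorm_one_eq_lintegral_enorm, ← ofReal_integral_norm_eq_lintegral_enorm (hX _),
      Real.norm_of_nonneg (hX0 _ _), ← ENNReal.ofReal_tsum_of_nonneg
        (fun n => integral_nonneg (hX0 n)) hs]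
    exact ENNReal.ofReal_ne_top
  filter_upwards [summable_norm_of_tsum_eLpNorm_ne_top le_rfl
    (fun n => (hX n).aestronglyMeasurable) hfin] with ω hω
  simpa only [Real.norm_of_nonneg (hX0 _ _)] using hω

theorem integral_apply_le_of_preconditioned_step {E : Type*} [NormedAddCommGroup E]
    [InnerProductSpace ℝ E] [CompleteSpace E] [IsProbabilityMeasure μ] {f : E → ℝ}
    {gradf : E → E} {Hf : E → E →L[ℝ] E} {L : ℝ} (hgrad : ∀ x, HasGradientAt f (gradf x) x)
    (hHf : ∀ x, HasFDerivAt gradf (Hf x) x) (hHub : ∀ x v, ⟪Hf x v, v⟫ ≤ L * ‖v‖ ^ 2)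
    {x y g : Ω → E} {S : Ω → E →L[ℝ] E} {α μS θ ι : ℝ} (hm : m ≤ m0)
    (hy : ∀ ω, y ω = x ω - α • S ω (g ω)) (hα : 0 ≤ α) (hαL : α * L ≤ μS)
    (hS : ∀ᵐ ω ∂μ, (S ω : E →ₗ[ℝ] E).IsSymmetric ∧ ∀ v, μS * ‖S ω v‖ ^ 2 ≤ ⟪S ω v, v⟫)
    (hfx : Integrable (fun ω => f (x ω)) μ) (hfy : Integrable (fun ω => f (y ω)) μ)
    (hQ : Integrable (fun ω => ⟪S ω (gradf (x ω)), gradf (x ω)⟫) μ)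
    (hX : Integrable (fun ω => ⟪S ω (g ω - gradf (x ω)), g ω - gradf (x ω)⟫) μ)
    (hcond : μ[fun ω => ⟪S ω (g ω - gradf (x ω)), g ω - gradf (x ω)⟫ | m]
      ≤ᵐ[μ] fun ω => θ ^ 2 * ⟪S ω (gradf (x ω)), gradf (x ω)⟫ + ι) :
    ∫ ω, f (y ω) ∂μ ≤ ∫ ω, f (x ω) ∂μ
      - α / 2 * (1 - θ ^ 2) * ∫ ω, ⟪S ω (gradf (x ω)), gradf (x ω)⟫ ∂μ + α / 2 * ι := by
  have hEX := integral_le_of_condExp_le hm hcond ((hQ.const_mul _).add (integrable_const ι))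
  rw [integral_add (hQ.const_mul _) (integrable_const ι), integral_const_mul, integral_const,
    probReal_univ, one_smul] at hEX
  have hpt : ∀ᵐ ω ∂μ, f (y ω) ≤ f (x ω) - α / 2 * ⟪S ω (gradf (x ω)), gradf (x ω)⟫
      + α / 2 * ⟪S ω (g ω - gradf (x ω)), g ω - gradf (x ω)⟫ := hS.mono fun ω hSω => by
    rw [hy]
    exact apply_sub_smul_le_of_inner_hessian_le hgrad hHf hHub hSω.1 hSω.2 hα hαL (x ω) (g ω)
  have hstep := integral_mono_ae hfy ((hfx.sub' (hQ.const_mul _)).fun_add (hX.const_mul _)) hpt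
  rw [integral_add (hfx.sub' (hQ.const_mul _)) (hX.const_mul _),
    integral_sub hfx (hQ.const_mul _),
    integral_const_mul, integral_const_mul] at hstep
  linarith [mul_le_mul_of_nonneg_left hEX (by linarith : 0 ≤ α / 2)]

end MeasureTheory

theorem global_sublinear_convergence_in_expectation_general {d : ℕ}
    {Ω : Type*} [m0 : MeasurableSpace Ω] (μP : Measure Ω) [IsProbabilityMeasure μP]
    (L μt Lt α θg fmin ιt : ℝ)
    (hL : 0 < L) (hμt : 0 < μt) (hLt : L ≤ Lt)
    (f : Vec d → ℝ) (gradf : Vec d → Vec d) (Hf : Vec d → (Vec d →L[ℝ] Vec d))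
    (hgrad : ∀ x, HasGradientAt f (gradf x) x)
    (hHf : ∀ x, HasFDerivAt gradf (Hf x) x)
    (hHub : ∀ x (v : Vec d), ⟪Hf x v, v⟫ ≤ L * ‖v‖ ^ 2)
    (hbdd : ∀ x, fmin ≤ f x)
    (w g : ℕ → Ω → Vec d) (Ht : ℕ → Ω → Matrix (Fin d) (Fin d) ℝ)
    (hwmeas : ∀ k, Measurable (w k))
    (hHtmeas : ∀ k, Measurable fun ω => Matrix.of.symm (Ht k ω))
    (hHtspec : ∀ k, ∀ᵐ ω ∂μP, (Ht k ω).IsSymm ∧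
      (∀ v : Vec d, μt * ‖v‖ ^ 2 ≤ ⟪toOp (Ht k ω) v, v⟫) ∧
      (∀ v : Vec d, ⟪toOp (Ht k ω) v, v⟫ ≤ Lt * ‖v‖ ^ 2))
    (w0 : Vec d) (hw0 : ∀ ω, w 0 ω = w0)
    (hα0 : 0 < α) (hα : α ≤ μt / L)
    (hiter : ∀ k ω, w (k + 1) ω = w k ω - α • toOp (Ht k ω)⁻¹ (g k ω))
    (hθg : θg ∈ Set.Ico (0 : ℝ) 1)
    (ι : ℕ → ℝ) (hι_pos : ∀ k, 0 < ι k) (hι_sum : HasSum ι ιt)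
    (hfint : ∀ k, Integrable (fun ω => f (w k ω)) μP)
    (hgradint : ∀ k, Integrable (fun ω => ‖gradf (w k ω)‖ ^ 2) μP)
    (hqint : ∀ k, Integrable (fun ω =>
      ⟪toOp (Ht k ω)⁻¹ (g k ω - gradf (w k ω)), g k ω - gradf (w k ω)⟫) μP)
    (hnorm : ∀ k,
      μP[(fun ω => ⟪toOp (Ht k ω)⁻¹ (g k ω - gradf (w k ω)),
            g k ω - gradf (w k ω)⟫) |
          MeasurableSpace.comap (fun ω => (w k ω, Matrix.of.symm (Ht k ω)))
            inferInstance]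
        ≤ᵐ[μP] fun ω =>
          θg ^ 2 * ⟪toOp (Ht k ω)⁻¹ (gradf (w k ω)), gradf (w k ω)⟫ + ι k) :
    (∀ T : ℕ, ∀ hT : 0 < T,
      (Finset.range T).inf' (Finset.nonempty_range_iff.mpr hT.ne')
          (fun k => ∫ ω, ‖gradf (w k ω)‖ ^ 2 ∂μP) ≤
        Lt / ((1 - θg ^ 2) * T) * (2 * (f w0 - fmin) / α + ιt)) ∧
    (∀ᵐ ω ∂μP, Summable fun k => ‖gradf (w k ω)‖ ^ 2) ∧
    (∀ᵐ ω ∂μP, Tendsto (fun k => ‖gradf (w k ω)‖ ^ 2) atTop (nhds 0)) := by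
  have hθ : 0 < 1 - θg ^ 2 := by nlinarith [hθg.1, hθg.2]
  set Q : ℕ → ℝ := fun k => ∫ ω, ⟪toOp (Ht k ω)⁻¹ (gradf (w k ω)), gradf (w k ω)⟫ ∂μP
  have hspec k := (hHtspec k).mono fun ω h => toOp_inv_bounds hμt h.1 h.2.1 h.2.2
  have hQint k : Integrable (fun ω => ⟪toOp (Ht k ω)⁻¹ (gradf (w k ω)), gradf (w k ω)⟫) μP :=
    ((hgradint k).const_mul μt⁻¹).mono' ((hHtmeas k).inner_toOp_inv
      ((Differentiable.continuous fun x => (hHf x).differentiableAt).measurable.comp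
        (hwmeas k))).aestronglyMeasurable ((hspec k).mono fun ω h => h.2.2.2 _)
  have hdesc k : ∫ ω, f (w (k + 1) ω) ∂μP ≤ ∫ ω, f (w k ω) ∂μP
      - α / 2 * (1 - θg ^ 2) * Q k + α / 2 * ι k :=
    integral_apply_le_of_preconditioned_step hgrad hHf hHub
      ((hwmeas k).prodMk (hHtmeas k)).comap_le (hiter k) hα0.le ((le_div_iff₀ hL).mp hα)
      ((hspec k).mono fun ω h => ⟨h.1, h.2.1⟩) (hfint k) (hfint (k + 1)) (hQint k) (hqint k)
      (hnorm k)
  have hQsum T := sum_range_le_of_le_sub_mul_add (by positivity) hdesc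
    (fun k => integral_mono (integrable_const fmin) (hfint k) fun ω => hbdd _)
    (fun k => mul_nonneg (by positivity) (hι_pos k).le)
    (hι_sum.mul_left (α / 2)) T
  have hGsum T : ∑ k ∈ range T, ∫ ω, ‖gradf (w k ω)‖ ^ 2 ∂μP
      ≤ Lt * ((f w0 - fmin + α / 2 * ιt) / (α / 2 * (1 - θg ^ 2))) :=
    calc ∑ k ∈ range T, ∫ ω, ‖gradf (w k ω)‖ ^ 2 ∂μP ≤ ∑ k ∈ range T, Lt * Q k :=
          sum_le_sum fun k _ => (integral_mono_ae (hgradint k) ((hQint k).const_mul Lt)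
            ((hspec k).mono fun ω h => h.2.2.1 _)).trans_eq (integral_const_mul _ _)
      _ ≤ Lt * ((f w0 - fmin + α / 2 * ιt) / (α / 2 * (1 - θg ^ 2))) := by
          rw [← mul_sum]
          refine mul_le_mul_of_nonneg_left ?_ (hL.le.trans hLt)
          simpa only [hw0, integral_const, probReal_univ, one_smul] using hQsum T
  have hsummable : ∀ᵐ ω ∂μP, Summable fun k => ‖gradf (w k ω)‖ ^ 2 :=
    ae_summable_of_summable_integral hgradint (fun _ _ => by positivity)
      (summable_of_sum_range_le (fun k => integral_nonneg fun _ => by positivity) hGsum)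
  refine ⟨fun T hT => ?_, hsummable, hsummable.mono fun ω h => h.tendsto_atTop_zero⟩
  refine (Finset.inf'_le_div_card_of_sum_le _ (hGsum T)).trans_eq ?_
  rw [card_range]
  field_simp

/-- Global sublinear convergence in expectation and almost-sure
convergence of the gradients under the stochastic norm condition. -/
theorem global_sublinear_convergence_in_expectation {d : ℕ}
    {Ω : Type*} [m0 : MeasurableSpace Ω] (μP : Measure Ω) [IsProbabilityMeasure μP]
    (L μt Lt α θg fmin ιt : ℝ)
    (hL : 0 < L) (hμt : 0 < μt) (hLt : L ≤ Lt)
    (f : Vec d → ℝ) (gradf : Vec d → Vec d) (Hf : Vec d → (Vec d →L[ℝ] Vec d))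
    (hsmooth : ContDiff ℝ 2 f)
    (hgrad : ∀ x, HasGradientAt f (gradf x) x)
    (hHf : ∀ x, HasFDerivAt gradf (Hf x) x)
    (hHub : ∀ x (v : Vec d), ⟪Hf x v, v⟫ ≤ L * ‖v‖ ^ 2)
    (hbdd : ∀ x, fmin ≤ f x)
    (w g : ℕ → Ω → Vec d) (Ht : ℕ → Ω → Matrix (Fin d) (Fin d) ℝ)
    (hwmeas : ∀ k, Measurable (w k)) (hgmeas : ∀ k, Measurable (g k))
    (hHtmeas : ∀ k, Measurable fun ω => Matrix.of.symm (Ht k ω))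
    (hHtspec : ∀ k, ∀ᵐ ω ∂μP, (Ht k ω).IsSymm ∧
      (∀ v : Vec d, μt * ‖v‖ ^ 2 ≤ ⟪toOp (Ht k ω) v, v⟫) ∧
      (∀ v : Vec d, ⟪toOp (Ht k ω) v, v⟫ ≤ Lt * ‖v‖ ^ 2))
    (w0 : Vec d) (hw0 : ∀ ω, w 0 ω = w0)
    (hα0 : 0 < α) (hα : α ≤ μt / L)
    (hiter : ∀ k ω, w (k + 1) ω = w k ω - α • toOp (Ht k ω)⁻¹ (g k ω))
    (hθg : θg ∈ Set.Ico (0 : ℝ) 1)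
    (ι : ℕ → ℝ) (hι_pos : ∀ k, 0 < ι k) (hι_sum : HasSum ι ιt)
    (hfint : ∀ k, Integrable (fun ω => f (w k ω)) μP)
    (hgradint : ∀ k, Integrable (fun ω => ‖gradf (w k ω)‖ ^ 2) μP)
    (hqint : ∀ k, Integrable (fun ω =>
      ⟪toOp (Ht k ω)⁻¹ (g k ω - gradf (w k ω)), g k ω - gradf (w k ω)⟫) μP)
    (hnorm : ∀ k,
      μP[(fun ω => ⟪toOp (Ht k ω)⁻¹ (g k ω - gradf (w k ω)),
            g k ω - gradf (w k ω)⟫) |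
          MeasurableSpace.comap (fun ω => (w k ω, Matrix.of.symm (Ht k ω)))
            inferInstance]
        ≤ᵐ[μP] fun ω =>
          θg ^ 2 * ⟪toOp (Ht k ω)⁻¹ (gradf (w k ω)), gradf (w k ω)⟫ + ι k) :
    (∀ T : ℕ, ∀ hT : 0 < T,
      (Finset.range T).inf' (Finset.nonempty_range_iff.mpr hT.ne')
          (fun k => ∫ ω, ‖gradf (w k ω)‖ ^ 2 ∂μP) ≤
        Lt / ((1 - θg ^ 2) * T) * (2 * (f w0 - fmin) / α + ιt)) ∧
    (∀ᵐ ω ∂μP, Summable fun k => ‖gradf (w k ω)‖ ^ 2) ∧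
    (∀ᵐ ω ∂μP, Tendsto (fun k => ‖gradf (w k ω)‖ ^ 2) atTop (nhds 0)) :=
  global_sublinear_convergence_in_expectation_general (m0 := m0) μP L μt Lt α θg fmin ιt hL hμt hLt
    f gradf Hf hgrad hHf hHub hbdd w g Ht hwmeas hHtmeas hHtspec w0 hw0 hα0 hα hiter hθg ι hι_pos
    hι_sum hfint hgradint hqint hnorm
end
end
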